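/- arXiv:2108.07991 — 3 statements merged into one kernel-verified Lean document; each statement's English description precedes it below -/
import Mathlib

section
/- Let R be a commutative Noetherian local ring, x ∈ R, and N a finitely generated R-module. The following are equivalent: (i) the multiplication map N → N by x factors through a finitely generated free R-module; (ii) x · Ext_R^i(N, X) = 0 for every i ≥ 1 and every finitely generated R-module X; (iii) x · Ext_R^1(N, Ω_R N) = 0, where Ω_R N is the first syzygy of N in a minimal free resolution. -/
open CategoryTheory IsLocalRing

section Defs
variable (R : Type) [CommRing R]

/-- vanishing of `Tor_n(M, N)` -/
noncomputable abbrev TorZero [IsNoetherianRing R] (n : ℕ) (M N : ModuleCat.{0} R) : Prop :=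
  Subsingleton (((Tor (ModuleCat.{0} R) n).obj M).obj N)

/-- vanishing of `Ext^n(M, N)` -/
noncomputable abbrev ExtZero (n : ℕ) (M N : ModuleCat.{0} R) : Prop :=
  Subsingleton (((Ext R (ModuleCat.{0} R) n).obj (Opposite.op M)).obj N)

/-- `x` annihilates `Ext^n(M, N)` -/
noncomputable abbrev SMulExtZero (x : R) (n : ℕ) (M N : ModuleCat.{0} R) : Prop :=
  ∀ e : ((Ext R (ModuleCat.{0} R) n).obj (Opposite.op M)).obj N, x • e = 0

/-- `M` is a minimal first syzygy `Ω N` of `N` over the local ring `R`: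
the kernel of a minimal free cover of `N`. -/
def IsSyzygyOf [IsLocalRing R] (N M : ModuleCat.{0} R) : Prop :=
  ∃ (q : ℕ) (g : (Fin q → R) →ₗ[R] N), Function.Surjective g ∧
    (LinearMap.ker g : Submodule R (Fin q → R)) ≤ (maximalIdeal R) • ⊤ ∧
    Nonempty (M ≃ₗ[R] LinearMap.ker g)

/-- `M` is a minimal `n`-th syzygy `Ω^n N` of `N` (with `Ω^0 N = N`). -/
def IsNthSyzygyOf [IsLocalRing R] : ℕ → ModuleCat.{0} R → ModuleCat.{0} R → Prop
  | 0, N, M => Nonempty (M ≃ₗ[R] N)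
  | (n+1), N, M => ∃ K : ModuleCat.{0} R, IsSyzygyOf R N K ∧ IsNthSyzygyOf n K M

/-- `M` and `N` are stably isomorphic (isomorphic up to free direct summands). -/
def StablyIso (M N : ModuleCat.{0} R) : Prop :=
  ∃ p q : ℕ, Nonempty ((↥M × (Fin p → R)) ≃ₗ[R] (↥N × (Fin q → R)))

/-- Tor-rigidity: one vanishing Tor (against any f.g. module) forces all higher ones. -/
noncomputable def TorRigid [IsNoetherianRing R] (M : ModuleCat.{0} R) : Prop :=
  ∀ (N : ModuleCat.{0} R), Module.Finite R N →
    ∀ i : ℕ, 1 ≤ i → TorZero R i M N → ∀ j, i ≤ j → TorZero R j M N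

/-- `n`-Tor-rigidity: `n` consecutive vanishing Tor's force all higher ones. -/
noncomputable def NTorRigid [IsNoetherianRing R] (n : ℕ) (M : ModuleCat.{0} R) : Prop :=
  ∀ (N : ModuleCat.{0} R), Module.Finite R N → ∀ t : ℕ,
    (∀ i, t + 1 ≤ i → i ≤ t + n → TorZero R i M N) → ∀ j, t + 1 ≤ j → TorZero R j M N

/-- the `𝔞`-depth of `M`: `∞` if `𝔞M = M`, otherwise the supremum (= common length) of
maximal `M`-regular sequences contained in `𝔞`. -/
noncomputable def edepth (𝔞 : Ideal R) (M : Type) [AddCommGroup M] [Module R M] : ℕ∞ :=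
  letI := Classical.dec (𝔞 • (⊤ : Submodule R M) = ⊤)
  if 𝔞 • (⊤ : Submodule R M) = ⊤ then ⊤
  else sSup {n : ℕ∞ | ∃ rs : List R, (rs.length : ℕ∞) = n ∧ (∀ r ∈ rs, r ∈ 𝔞) ∧
    RingTheory.Sequence.IsRegular M rs}

/-- `T` is an Auslander transpose of `N`, computed from a minimal free presentation. -/
def IsTransposeOf [IsLocalRing R] (N T : ModuleCat.{0} R) : Prop :=
  ∃ (q p : ℕ) (g : (Fin q → R) →ₗ[R] N) (f : (Fin p → R) →ₗ[R] (Fin q → R)),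
    Function.Surjective g ∧
    LinearMap.range f = LinearMap.ker g ∧
    (LinearMap.ker g : Submodule R (Fin q → R)) ≤ (maximalIdeal R) • ⊤ ∧
    (LinearMap.ker f : Submodule R (Fin p → R)) ≤ (maximalIdeal R) • ⊤ ∧
    Nonempty (T ≃ₗ[R] (Module.Dual R (Fin p → R) ⧸ LinearMap.range f.dualMap))

/-- `depth (R_𝔭)`, the depth of the local ring `R_𝔭`. -/
noncomputable def depthLoc (𝔭 : Ideal R) [𝔭.IsPrime] : ℕ∞ :=
  edepth (Localization.AtPrime 𝔭) (maximalIdeal (Localization.AtPrime 𝔭)) (Localization.AtPrime 𝔭)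

/-- `depth_{R_𝔭} (M_𝔭)`, the depth of the localized module over the localized ring. -/
noncomputable def primeDepth (𝔭 : Ideal R) [𝔭.IsPrime] (M : Type) [AddCommGroup M]
    [Module R M] : ℕ∞ :=
  edepth (Localization.AtPrime 𝔭) (maximalIdeal (Localization.AtPrime 𝔭))
    (LocalizedModule 𝔭.primeCompl M)

/-- A Noetherian local ring is Gorenstein iff `R` has finite injective dimension as an
`R`-module, i.e. `Ext^i(k, R) = 0` for all sufficiently large `i`. -/
noncomputable def IsGorensteinLocal [IsLocalRing R] : Prop :=
  ∃ d : ℕ, ∀ i : ℕ, d < i → ExtZero R i (ModuleCat.of R (R ⧸ maximalIdeal R)) (ModuleCat.of R R)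

/-- An unramified regular local ring: the maximal ideal is generated by `dim R` elements, and
no rational prime that is a nonzero element of the maximal ideal lies in its square. -/
def IsUnramifiedRegularLocal [IsLocalRing R] : Prop :=
  (∃ s : Finset R, Ideal.span (s : Set R) = maximalIdeal R ∧
    (s.card : WithBot ℕ∞) = ringKrullDim R) ∧
  ∀ p : ℕ, p.Prime → (p : R) ≠ 0 → (p : R) ∈ maximalIdeal R → (p : R) ∉ (maximalIdeal R) ^ 2

end Defs

/-!
Compute `Ext` with a projective resolution `P → N`: `x` kills `Ext^{m+1}(N, X)` iff `x` times
every cocycle `P_{m+1} → X` is a coboundary. If `x • 𝟙_N = g ∘ f` through a free module `F`,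
then `x • 𝟙_P` is homotopic to the composite of lifts `P → F → P`, which vanishes in positive
degrees, so `x` times a cocycle is a coboundary. Conversely, for a minimal free cover
`0 → ΩN → F → N → 0`, a lift `α : P₀ → F` of the augmentation induces a cocycle
`P₁ → ΩN`; if `x` times it is the coboundary of `h : P₀ → ΩN`, then `x • α - h` vanishes on
the image of `P₁`, hence descends to `f : N → F` with `g ∘ f = x • 𝟙_N`.
-/

universe u v

section
variable {R : Type u} [Ring R] {N : Type v} [AddCommGroup N] [Module R N]

lemma span_range_comp_succAbove_eq_top_of_isUnit {q : ℕ} {b : Fin (q + 1) → N}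
    (hb : Submodule.span R (Set.range b) = ⊤) {v : Fin (q + 1) → R} (hv : ∑ i, v i • b i = 0)
    {j : Fin (q + 1)} (hj : IsUnit (v j)) :
    Submodule.span R (Set.range (b ∘ j.succAbove)) = ⊤ := by
  obtain ⟨u, hu⟩ := hj
  set M := Submodule.span R (Set.range (b ∘ j.succAbove))
  rw [Fin.sum_univ_succAbove _ j, ← hu] at hv
  have hbj : b j ∈ M := by
    rw [← inv_smul_smul u (b j), Units.smul_def, Units.smul_def, eq_neg_of_add_eq_zero_left hv]
    exact M.smul_mem _ (M.neg_mem (M.sum_mem fun i _ ↦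
      M.smul_mem _ (Submodule.subset_span ⟨i, rfl⟩)))
  rw [eq_top_iff, ← hb, Submodule.span_le]
  rintro _ ⟨i, rfl⟩
  rcases Fin.eq_self_or_eq_succAbove j i with rfl | ⟨k, rfl⟩
  · exact hbj
  · exact Submodule.subset_span ⟨k, rfl⟩

end

section
variable {R : Type u} [CommRing R]

lemma mem_ideal_smul_top_pi_of_forall_mem {ι : Type*} [Fintype ι] {I : Ideal R} {v : ι → R}
    (hv : ∀ i, v i ∈ I) : v ∈ I • (⊤ : Submodule R (ι → R)) := by
  classical
  rw [pi_eq_sum_univ v]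
  exact Submodule.sum_mem _ fun i _ ↦ Submodule.smul_mem_smul (hv i) trivial

end

namespace IsLocalRing
variable {R : Type u} [CommRing R] [IsLocalRing R] {N : Type v} [AddCommGroup N] [Module R N]

lemma ker_linearCombination_le_maximalIdeal_smul {q : ℕ} {b : Fin q → N}
    (hb : Submodule.span R (Set.range b) = ⊤)
    (hmin : ∀ p < q, ∀ b' : Fin p → N, Submodule.span R (Set.range b') ≠ ⊤) :
    LinearMap.ker (Fintype.linearCombination R b) ≤ maximalIdeal R • ⊤ := by
  intro v hv
  refine mem_ideal_smul_top_pi_of_forall_mem fun j ↦ ?_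
  by_contra hj
  cases q with
  | zero => exact j.elim0
  | succ q =>
    refine hmin q q.lt_succ_self _ (span_range_comp_succAbove_eq_top_of_isUnit hb ?_
      (notMem_maximalIdeal.1 hj))
    rwa [LinearMap.mem_ker, Fintype.linearCombination_apply] at hv

theorem exists_surjective_ker_le_maximalIdeal_smul [Module.Finite R N] :
    ∃ (q : ℕ) (g : (Fin q → R) →ₗ[R] N), Function.Surjective g ∧
      LinearMap.ker g ≤ maximalIdeal R • ⊤ := by
  classical
  have hex : ∃ q, ∃ b : Fin q → N, Submodule.span R (Set.range b) = ⊤ :=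
    Module.Finite.exists_fin
  obtain ⟨b, hb⟩ := Nat.find_spec hex
  refine ⟨_, Fintype.linearCombination R b, ?_, ker_linearCombination_le_maximalIdeal_smul hb
    fun p hp b' hb' ↦ Nat.find_min hex hp ⟨b', hb'⟩⟩
  rw [← LinearMap.range_eq_top, Fintype.range_linearCombination, hb]

end IsLocalRing

section
variable {R : Type u} [CommRing R]

lemma CategoryTheory.ShortComplex.mem_annihilator_homology_iff
    (S : ShortComplex (ModuleCat.{u} R)) (x : R) :
    x ∈ Module.annihilator R S.homology ↔
      ∀ z : S.X₂, S.g z = 0 → ∃ w : S.X₁, S.f w = x • z := by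
  rw [S.moduleCatHomologyIso.toLinearEquiv.annihilator_eq,
    show Module.annihilator R S.moduleCatLeftHomologyData.H =
      (LinearMap.range S.moduleCatToCycles).colon Set.univ from Submodule.annihilator_quotient,
    Submodule.mem_colon]
  constructor
  · intro h z hz
    obtain ⟨w, hw⟩ := h ⟨z, hz⟩ (Set.mem_univ _)
    exact ⟨w, congrArg Subtype.val hw⟩
  · rintro h ⟨z, hz⟩ -
    obtain ⟨w, hw⟩ := h z hz
    exact ⟨w, Subtype.ext hw⟩

lemma CategoryTheory.ProjectiveResolution.mem_annihilator_ext_succ_iff {N : ModuleCat.{u} R}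
    (P : ProjectiveResolution N) (X : ModuleCat.{u} R) (x : R) (m : ℕ) :
    x ∈ Module.annihilator R (((Ext R (ModuleCat.{u} R) (m + 1)).obj (Opposite.op N)).obj X) ↔
      ∀ c : P.complex.X (m + 1) ⟶ X, P.complex.d (m + 2) (m + 1) ≫ c = 0 →
        ∃ h : P.complex.X m ⟶ X, P.complex.d (m + 1) m ≫ h = x • c := by
  rw [(P.isoExt (m + 1) X ≪≫ HomologicalComplex.homologyIsoSc' _ m (m + 1) (m + 2)
    (by simp) (by simp)).toLinearEquiv.annihilator_eq, ShortComplex.mem_annihilator_homology_iff]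
  rfl

lemma CategoryTheory.ProjectiveResolution.mem_annihilator_ext_succ_of_homotopy
    {N : ModuleCat.{u} R} (P : ProjectiveResolution N) {x : R} {φ : P.complex ⟶ P.complex}
    (H : Homotopy (x • 𝟙 P.complex) φ) {m : ℕ} (hφ : φ.f (m + 1) = 0) (X : ModuleCat.{u} R) :
    x ∈ Module.annihilator R (((Ext R (ModuleCat.{u} R) (m + 1)).obj (Opposite.op N)).obj X) := by
  refine (P.mem_annihilator_ext_succ_iff X x m).2 fun c hc ↦ ⟨H.hom m (m + 1) ≫ c, ?_⟩
  have hx := H.comm (m + 1)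
  rw [Homotopy.dNext_succ_chainComplex, Homotopy.prevD_chainComplex, hφ, add_zero,
    HomologicalComplex.smul_f_apply, HomologicalComplex.id_f] at hx
  calc _ = (x • 𝟙 _) ≫ c := by
        rw [hx, Preadditive.add_comp, Category.assoc, Category.assoc, hc, Limits.comp_zero,
          add_zero]
    _ = x • c := by rw [Linear.smul_comp, Category.id_comp]

lemma CategoryTheory.mem_annihilator_ext_succ_of_comp_eq_smul {N F : ModuleCat.{u} R}
    [Projective F] {x : R} (f : N ⟶ F) (g : F ⟶ N) (hfg : f ≫ g = x • 𝟙 N) (m : ℕ)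
    (X : ModuleCat.{u} R) :
    x ∈ Module.annihilator R (((Ext R (ModuleCat.{u} R) (m + 1)).obj (Opposite.op N)).obj X) := by
  let P : ProjectiveResolution N := (HasProjectiveResolution.out (Z := N)).some
  let Q := ProjectiveResolution.self F
  have hsmul : (x • 𝟙 P.complex) ≫ P.π = P.π ≫ (ChainComplex.single₀ _).map (f ≫ g) := by
    ext y : 3
    simp only [hfg, HomologicalComplex.comp_f, HomologicalComplex.smul_f_apply,
      HomologicalComplex.id_f, ChainComplex.single₀_map_f_zero]
    exact map_smul (P.π.f 0).hom x y
  have hQ : Limits.IsZero (Q.complex.X (m + 1)) :=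
    HomologicalComplex.isZero_single_obj_X _ 0 F (m + 1) (by simp)
  refine P.mem_annihilator_ext_succ_of_homotopy
    ((ProjectiveResolution.liftHomotopy (f ≫ g) _ _ hsmul (by simp)).trans
      (ProjectiveResolution.liftCompHomotopy f g P Q P)) ?_ X
  rw [HomologicalComplex.comp_f, hQ.eq_of_tgt ((ProjectiveResolution.lift f P Q).f (m + 1)) 0,
    Limits.zero_comp]

lemma CategoryTheory.ShortComplex.ShortExact.exists_comp_g_eq_smul_of_mem_annihilator_ext_one
    {S : ShortComplex (ModuleCat.{u} R)} (hS : S.ShortExact) {x : R}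
    (hx : x ∈ Module.annihilator R
      (((Ext R (ModuleCat.{u} R) 1).obj (Opposite.op S.X₃)).obj S.X₁)) :
    ∃ f : S.X₃ ⟶ S.X₂, f ≫ S.g = x • 𝟙 S.X₃ := by
  have : Mono S.f := hS.mono_f
  have : Epi S.g := hS.epi_g
  let P : ProjectiveResolution S.X₃ := (HasProjectiveResolution.out (Z := S.X₃)).some
  -- ascribed so that its target is `S.X₃` rather than the degree-0 object of a single complex
  let π : P.complex.X 0 ⟶ S.X₃ := P.π.f 0
  have hP : (ShortComplex.mk (P.complex.d 1 0) π P.complex_d_comp_π_f_zero).Exact := P.exact₀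
  have : Epi π := inferInstanceAs (Epi (P.π.f 0))
  let α : P.complex.X 0 ⟶ S.X₂ := Projective.factorThru π S.g
  have hα : α ≫ S.g = π := Projective.factorThru_comp _ _
  let c : P.complex.X 1 ⟶ S.X₁ := hS.exact.lift (P.complex.d 1 0 ≫ α)
    (by rw [Category.assoc, hα]; exact P.complex_d_comp_π_f_zero)
  have hc : c ≫ S.f = P.complex.d 1 0 ≫ α := hS.exact.lift_f _ _
  have hcocycle : P.complex.d 2 1 ≫ c = 0 := by
    rw [← cancel_mono S.f]
    simp [hc]
  obtain ⟨h, hh⟩ := (P.mem_annihilator_ext_succ_iff S.X₁ x 0).1 hx c hcocycle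
  let β : P.complex.X 0 ⟶ S.X₂ := x • α - h ≫ S.f
  have hβ : P.complex.d 1 0 ≫ β = 0 := by
    simp [β, ← Category.assoc, hh, hc]
  refine ⟨hP.desc β hβ, ?_⟩
  rw [← cancel_epi π, hP.g_desc_assoc]
  simp [β, hα]

end

/-- factoring multiplication by `x` through a free module is equivalent to
`x` annihilating all `Ext^i(N, -)`, and to `x` annihilating `Ext^1(N, Ω N)`. -/
theorem mul_factors_through_free_tfae
    (R : Type) [CommRing R] [IsNoetherianRing R] [IsLocalRing R]
    (x : R) (N : ModuleCat.{0} R) [Module.Finite R N] :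
    List.TFAE [
      (∃ (q : ℕ) (f : N →ₗ[R] (Fin q → R)) (g : (Fin q → R) →ₗ[R] N),
        g ∘ₗ f = x • (LinearMap.id : N →ₗ[R] N)),
      (∀ i : ℕ, 1 ≤ i → ∀ X : ModuleCat.{0} R, Module.Finite R X → SMulExtZero R x i N X),
      (∀ ΩN : ModuleCat.{0} R, IsSyzygyOf R N ΩN → SMulExtZero R x 1 N ΩN)] := by
  tfae_have 1 → 2
  | ⟨q, f, g, hfg⟩, i, hi, X, _ => by
    obtain ⟨m, rfl⟩ := Nat.exists_eq_add_of_le' hi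
    have : Projective (ModuleCat.of R (Fin q → R)) :=
      ModuleCat.projective_of_free (Pi.basisFun R (Fin q))
    exact Module.mem_annihilator.1 (mem_annihilator_ext_succ_of_comp_eq_smul
      (ModuleCat.ofHom f) (ModuleCat.ofHom g) (ModuleCat.hom_ext hfg) m X)
  tfae_have 2 → 3
  | h2, ΩN, ⟨q, g, _, _, ⟨e⟩⟩ =>
    have : Module.Finite R ΩN := Module.Finite.equiv e.symm
    h2 1 le_rfl ΩN this
  tfae_have 3 → 1
  | h3 => by
    obtain ⟨q, g, hg, hker⟩ := exists_surjective_ker_le_maximalIdeal_smul (R := R) (N := N)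
    have hx := Module.mem_annihilator.2
      (h3 (ModuleCat.of R (LinearMap.ker g)) ⟨q, g, hg, hker, ⟨LinearEquiv.refl R _⟩⟩)
    obtain ⟨f, hf⟩ :=
      (LinearMap.shortExact_shortComplexKer hg).exists_comp_g_eq_smul_of_mem_annihilator_ext_one hx
    exact ⟨q, f.hom, g, congrArg ModuleCat.Hom.hom hf⟩
  tfae_finish
end

section
/- Let R be a commutative Noetherian local ring, x ∈ R a non zero-divisor on a finitely generated R-module N. If x · Ext_R^1(N, Ω_R N) = 0, then Ω_R(N/xN) is isomorphic, up to free direct summands, to N ⊕ Ω_R N. -/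
open CategoryTheory IsLocalRing

/-!
Let `g : F → N` be a free cover with kernel `ΩN`. Since `x` kills `Ext¹(N, ΩN)`, multiplication
by `x` on `ΩN` extends to a map `F → ΩN`; subtracting it from `x • id_F` gives a map vanishing on
`ΩN`, i.e. a lift `s : N → F` of multiplication by `x` on `N`. As `x` is `N`-regular,
`(n, z) ↦ s n + z` identifies `N ⊕ ΩN` with the kernel of the (non-minimal) free cover
`F → N → N/xN`, and Schanuel's lemma compares that kernel with `Ω(N/xN)`.
-/

universe u

open scoped Pointwise

section Schanuel

variable {R M F₁ F₂ : Type*} [Ring R] [AddCommGroup M] [Module R M]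
  [AddCommGroup F₁] [Module R F₁] [AddCommGroup F₂] [Module R F₂]

lemma nonempty_ker_coprod_equiv_prod_ker [Module.Projective R F₁] (g₁ : F₁ →ₗ[R] M)
    {g₂ : F₂ →ₗ[R] M} (hg₂ : Function.Surjective g₂) :
    Nonempty (LinearMap.ker (g₁.coprod g₂) ≃ₗ[R] F₁ × LinearMap.ker g₂) := by
  obtain ⟨h, hh⟩ := Module.projective_lifting_property g₂ (-g₁) hg₂
  replace hh (a) : g₂ (h a) = -g₁ a := LinearMap.congr_fun hh a
  let j : F₁ × LinearMap.ker g₂ →ₗ[R] F₁ × F₂ :=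
    (LinearMap.id.prod h).coprod (LinearMap.inr R F₁ F₂ ∘ₗ (LinearMap.ker g₂).subtype)
  have hj : ∀ p, j p ∈ LinearMap.ker (g₁.coprod g₂) := fun ⟨a, z, hz⟩ => by
    simp [j, hh, LinearMap.mem_ker.1 hz]
  have hinj : Function.Injective j := by
    rw [← LinearMap.ker_eq_bot, LinearMap.ker_eq_bot']
    rintro ⟨a, z⟩ hjz
    obtain ⟨rfl, hz⟩ : a = 0 ∧ h a + z = 0 := by simpa [j] using hjz
    simpa using hz
  refine ⟨(LinearEquiv.ofBijective (j.codRestrict _ hj)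
    ⟨fun p q hpq => hinj congr($(hpq).1), fun ⟨⟨a, b⟩, hab⟩ => ?_⟩).symm⟩
  have hb : b - h a ∈ LinearMap.ker g₂ := by
    simpa [hh, add_comm] using hab
  exact ⟨(a, ⟨b - h a, hb⟩), Subtype.ext (by simp [j])⟩

theorem nonempty_ker_prod_equiv_ker_prod [Module.Projective R F₁] [Module.Projective R F₂]
    {g₁ : F₁ →ₗ[R] M} {g₂ : F₂ →ₗ[R] M} (hg₁ : Function.Surjective g₁)
    (hg₂ : Function.Surjective g₂) :
    Nonempty ((LinearMap.ker g₁ × F₂) ≃ₗ[R] (LinearMap.ker g₂ × F₁)) := by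
  obtain ⟨e₁⟩ := nonempty_ker_coprod_equiv_prod_ker g₁ hg₂
  obtain ⟨e₂⟩ := nonempty_ker_coprod_equiv_prod_ker g₂ hg₁
  let swap : LinearMap.ker (g₁.coprod g₂) ≃ₗ[R] LinearMap.ker (g₂.coprod g₁) :=
    (LinearEquiv.prodComm R F₁ F₂).ofSubmodules _ _ <| by
      ext ⟨a, b⟩
      simp [add_comm]
  exact ⟨(LinearEquiv.prodComm R _ _).trans <| e₂.symm.trans <| swap.symm.trans <| e₁.trans <|
    LinearEquiv.prodComm R _ _⟩

end Schanuel

section SMulLift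

variable {R M F : Type*} [CommRing R] [AddCommGroup M] [Module R M]
  [AddCommGroup F] [Module R F]

lemma exists_comp_eq_smul_id_of_comp_subtype_eq_smul (x : R) {g : F →ₗ[R] M}
    (hg : Function.Surjective g) (φ : F →ₗ[R] LinearMap.ker g)
    (hφ : φ ∘ₗ (LinearMap.ker g).subtype = x • LinearMap.id) :
    ∃ s : M →ₗ[R] F, g ∘ₗ s = x • LinearMap.id := by
  let σ : F →ₗ[R] F := x • LinearMap.id - (LinearMap.ker g).subtype ∘ₗ φ
  have hσ : LinearMap.ker g ≤ LinearMap.ker σ := fun z hz => by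
    have h : φ z = x • ⟨z, hz⟩ := LinearMap.congr_fun hφ ⟨z, hz⟩
    simp [σ, h]
  refine ⟨(LinearMap.ker g).liftQ σ hσ ∘ₗ (g.quotKerEquivOfSurjective hg).symm.toLinearMap, ?_⟩
  refine LinearMap.ext fun n => ?_
  obtain ⟨y, rfl⟩ := hg n
  have : (g.quotKerEquivOfSurjective hg).symm (g y) = Submodule.Quotient.mk y :=
    (LinearEquiv.symm_apply_eq _).2 rfl
  simp [this, σ]

lemma nonempty_ker_mkQ_comp_equiv_prod {x : R} (hx : IsSMulRegular M x) {g : F →ₗ[R] M}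
    {s : M →ₗ[R] F} (hs : g ∘ₗ s = x • LinearMap.id) :
    Nonempty (LinearMap.ker ((x • (⊤ : Submodule R M)).mkQ ∘ₗ g) ≃ₗ[R] M × LinearMap.ker g) := by
  replace hs (n) : g (s n) = x • n := LinearMap.congr_fun hs n
  let j : M × LinearMap.ker g →ₗ[R] F := s.coprod (LinearMap.ker g).subtype
  have hj (p) : j p ∈ LinearMap.ker ((x • (⊤ : Submodule R M)).mkQ ∘ₗ g) := by
    obtain ⟨n, z, hz⟩ := p
    rw [LinearMap.mem_ker, LinearMap.comp_apply, Submodule.mkQ_apply,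
      Submodule.Quotient.mk_eq_zero]
    simpa [j, hs, LinearMap.mem_ker.1 hz] using
      Submodule.smul_mem_pointwise_smul n x (⊤ : Submodule R M) trivial
  have hinj : Function.Injective j := by
    rw [← LinearMap.ker_eq_bot, LinearMap.ker_eq_bot']
    rintro ⟨n, z, hz⟩ (hjn : s n + z = 0)
    obtain rfl : n = 0 := hx.right_eq_zero_of_smul <| by
      simpa [hs, LinearMap.mem_ker.1 hz] using congr(g $hjn)
    simp_all
  refine ⟨(LinearEquiv.ofBijective (j.codRestrict _ hj)
    ⟨fun p q hpq => hinj congr($(hpq).1), fun ⟨y, hy⟩ => ?_⟩).symm⟩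
  rw [LinearMap.mem_ker, LinearMap.comp_apply, Submodule.mkQ_apply,
    Submodule.Quotient.mk_eq_zero, Submodule.mem_smul_pointwise_iff_exists] at hy
  obtain ⟨n, -, hn⟩ := hy
  refine ⟨(n, ⟨y - s n, by simp [hs, hn]⟩), Subtype.ext ?_⟩
  simp [j]

end SMulLift

namespace CategoryTheory.ProjectiveResolution

variable {R : Type*} [Ring R] {C : Type*} [Category C] [Abelian C] [Linear R C]
  [EnoughProjectives C] {X Y : C} (P : ProjectiveResolution X)

lemma exists_d_comp_eq_smul_of_smul_ext_eq_zero (x : R)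
    (hx : ∀ e : ((Ext R C 1).obj (Opposite.op X)).obj Y, x • e = 0)
    (c : P.complex.X 1 ⟶ Y) (hc : P.complex.d 2 1 ≫ c = 0) :
    ∃ v : P.complex.X 0 ⟶ Y, P.complex.d 1 0 ≫ v = x • c := by
  let K := P.complex.linearYonedaObj R Y
  let S := K.sc' 0 1 2
  let e := (P.isoExt 1 Y ≪≫ ShortComplex.homologyMapIso (K.isoSc' 0 1 2 (by simp) (by simp))
    ≪≫ S.moduleCatHomologyIso).toLinearEquiv
  let z : LinearMap.ker S.g.hom := ⟨c, hc⟩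
  have hz : (Submodule.Quotient.mk (x • z) : S.moduleCatLeftHomologyData.H) = 0 :=
    e.symm.injective <| (e.symm.map_smul x (Submodule.Quotient.mk z)).trans <|
      (hx _).trans e.symm.map_zero.symm
  obtain ⟨v, hv⟩ := (Submodule.Quotient.mk_eq_zero _).1 hz
  exact ⟨v, congrArg Subtype.val hv⟩

end CategoryTheory.ProjectiveResolution

lemma exists_comp_subtype_eq_smul_of_smul_ext_eq_zero {R : Type u} [CommRing R] (x : R)
    {N Y : ModuleCat.{u} R} (hx : ∀ e : ((Ext R (ModuleCat.{u} R) 1).obj (Opposite.op N)).obj Y,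
      x • e = 0)
    {F : Type u} [AddCommGroup F] [Module R F] [Module.Projective R F]
    (g : F →ₗ[R] N) (hg : Function.Surjective g) (u : LinearMap.ker g →ₗ[R] Y) :
    ∃ φ : F →ₗ[R] Y, φ ∘ₗ (LinearMap.ker g).subtype = x • u := by
  obtain ⟨P⟩ := HasProjectiveResolution.out (Z := N)
  have : Module.Projective R (P.complex.X 0) :=
    (IsProjective.iff_projective _).2 (P.projective 0)
  let d : P.complex.X 1 →ₗ[R] P.complex.X 0 := (P.complex.d 1 0).hom
  let ε : P.complex.X 0 →ₗ[R] N := (P.π.f 0).hom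
  have hε : Function.Surjective ε := (ModuleCat.epi_iff_surjective _).1 inferInstance
  have hεd : ε ∘ₗ d = 0 := congrArg ModuleCat.Hom.hom P.complex_d_comp_π_f_zero
  have hexact : LinearMap.ker ε ≤ LinearMap.range d :=
    (ShortComplex.moduleCat_exact_iff_ker_sub_range _).1 P.exact₀
  obtain ⟨a, ha⟩ := Module.projective_lifting_property g ε hg
  obtain ⟨b, hb⟩ := Module.projective_lifting_property ε g hε
  replace ha (w) : g (a w) = ε w := LinearMap.congr_fun ha w
  replace hb (y) : ε (b y) = g y := LinearMap.congr_fun hb y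
  replace hεd (w) : ε (d w) = 0 := LinearMap.congr_fun hεd w
  let t : P.complex.X 1 →ₗ[R] LinearMap.ker g := (a ∘ₗ d).codRestrict _ fun w => by
    simp [ha, hεd]
  let m : F →ₗ[R] LinearMap.ker g := (a ∘ₗ b - LinearMap.id).codRestrict _ fun y => by
    simp [ha, hb]
  obtain ⟨v, hv⟩ :=
      P.exists_d_comp_eq_smul_of_smul_ext_eq_zero x hx (ModuleCat.ofHom (u ∘ₗ t)) <| by
    ext w
    have hdd : d (P.complex.d 2 1 w) = 0 := congr($(P.complex.d_comp_d 2 1 0).hom w)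
    have : t (P.complex.d 2 1 w) = 0 := Subtype.ext <| by simp [t, hdd]
    simp [this]
  replace hv (w) : v (d w) = x • u (t w) := congr($(hv).hom w)
  -- on `ker g`, `v ∘ b` agrees with `x • u` up to `x • u ∘ m`, which is defined on all of `F`
  refine ⟨v.hom ∘ₗ b - x • u ∘ₗ m, LinearMap.ext fun ⟨z, hz⟩ => ?_⟩
  obtain ⟨w, hw⟩ := hexact (show ε (b z) = 0 by rw [hb]; exact hz)
  have hm : m z = t w - ⟨z, hz⟩ := Subtype.ext <| by simp [m, t, hw]
  simp [hm, ← hw, hv, smul_sub]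

theorem syzygy_of_quotient_stably_iso_general
    (R : Type) [CommRing R] [IsLocalRing R]
    (x : R) (N : ModuleCat.{0} R)
    (hreg : IsSMulRegular (↥N) x)
    (ΩN : ModuleCat.{0} R) (hΩ : IsSyzygyOf R N ΩN)
    (hann : SMulExtZero R x 1 N ΩN)
    (S : ModuleCat.{0} R)
    (hS : IsSyzygyOf R (ModuleCat.of R (QuotSMulTop x ↥N)) S) :
    StablyIso R S (ModuleCat.of R (↥N × ↥ΩN)) := by
  obtain ⟨q, g, hg, -, ⟨eΩ⟩⟩ := hΩ
  obtain ⟨p, g', hg', -, ⟨eS⟩⟩ := hS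
  obtain ⟨φ, hφ⟩ :=
    exists_comp_subtype_eq_smul_of_smul_ext_eq_zero x hann g hg eΩ.symm.toLinearMap
  obtain ⟨s, hs⟩ :=
      exists_comp_eq_smul_id_of_comp_subtype_eq_smul x hg (eΩ.toLinearMap ∘ₗ φ) <| by
    rw [LinearMap.comp_assoc, hφ]
    ext
    simp
  obtain ⟨eK⟩ := nonempty_ker_mkQ_comp_equiv_prod hreg hs
  obtain ⟨eSch⟩ := nonempty_ker_prod_equiv_ker_prod hg'
    (g₂ := (x • (⊤ : Submodule R N)).mkQ ∘ₗ g) ((Submodule.mkQ_surjective _).comp hg)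
  exact ⟨q, p, ⟨eS.prodCongr (.refl _ _) ≪≫ₗ eSch ≪≫ₗ eK.prodCongr (.refl _ _) ≪≫ₗ
    ((LinearEquiv.refl R N).prodCongr eΩ.symm).prodCongr (.refl _ _)⟩⟩

/-- if `x` is `N`-regular and `x · Ext^1(N, ΩN) = 0` then
`Ω(N/xN)` is stably isomorphic to `N ⊕ ΩN`. -/
theorem syzygy_of_quotient_stably_iso
    (R : Type) [CommRing R] [IsNoetherianRing R] [IsLocalRing R]
    (x : R) (N : ModuleCat.{0} R) [Module.Finite R N]
    (hreg : IsSMulRegular (↥N) x)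
    (ΩN : ModuleCat.{0} R) (hΩ : IsSyzygyOf R N ΩN)
    (hann : SMulExtZero R x 1 N ΩN)
    (S : ModuleCat.{0} R)
    (hS : IsSyzygyOf R (ModuleCat.of R (QuotSMulTop x ↥N)) S) :
    StablyIso R S (ModuleCat.of R (↥N × ↥ΩN)) :=
  syzygy_of_quotient_stably_iso_general R x N hreg ΩN hΩ hann S hS
end

section
/- Let R be a commutative Noetherian local ring, N a nonzero finitely generated R-module, M = Ω_R N its first syzygy, and x ∈ R an R-regular element with x · Ext_R^1(N, Ω_R N) = 0. Then there is a short exact sequence 0 → F → N ⊕ Ω_R N → M/xM → 0 with F a finitely generated free R-module. -/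
open CategoryTheory IsLocalRing

/-! Write `M = ker (g : F₀ → N)` with `F₀` free. Computing `Ext¹(N, M)` from a projective
resolution that starts with `g`, every map `ker g → M` is a 1-cocycle; since `x` kills its class,
`x • id_M` extends to some `h : F₀ → M`. As `x` is `M`-regular (`M` sits inside `F₀`), the map
`(g, h) : F₀ → N × M` is injective, and its cokernel is the pushout of `g` along `h`, which is
`M/xM` via `(n, m) ↦ m - h̄ n` for the map `h̄ : N → M/xM` induced by `h`. -/

open Limits Projective Pointwise

universe u

lemma CategoryTheory.Projective.d_comp_self {C : Type*} [Category C] [Abelian C]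
    [EnoughProjectives C] {X Y : C} (f : X ⟶ Y) : d f ≫ f = 0 :=
  (Category.assoc _ _ _).trans ((congrArg _ (kernel.condition f)).trans comp_zero)

namespace CategoryTheory.ProjectiveResolution

section

variable {C : Type*} [Category C] [Abelian C] [EnoughProjectives C] {Z P : C} (π : P ⟶ Z)

/-- `ProjectiveResolution.ofComplex`, started at the given cover `π` instead of the chosen one. -/
noncomputable def complexOfEpi : ChainComplex C ℕ :=
  ChainComplex.mk' P (syzygies π) (d π) fun f => ⟨_, d f, d_comp_self f⟩

lemma complexOfEpi_d_one_zero : (complexOfEpi π).d 1 0 = d π := by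
  simp [complexOfEpi]

lemma complexOfEpi_exactAt_succ (n : ℕ) : (complexOfEpi π).ExactAt (n + 1) := by
  rw [HomologicalComplex.exactAt_iff' _ (n + 1 + 1) (n + 1) n (by simp) (by simp)]
  let e : (complexOfEpi π).X (n + 2) ≅ syzygies ((complexOfEpi π).d (n + 1) n) :=
    ChainComplex.mk'XIso _ _ _ _ n
  have hd : (complexOfEpi π).d (n + 2) (n + 1) = e.hom ≫ d ((complexOfEpi π).d (n + 1) n) :=
    ChainComplex.mk'_d _ _ _ _ n
  refine ShortComplex.exact_of_iso ?_ (exact_d_f ((complexOfEpi π).d (n + 1) n))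
  refine ShortComplex.isoMk e.symm (Iso.refl _) (Iso.refl _) ?_ ?_
  · exact (Iso.symm_hom e ▸ ((congrArg _ hd).trans (Iso.inv_hom_id_assoc e _))).trans
      (Category.comp_id _).symm
  · exact (Category.id_comp _).trans (Category.comp_id _).symm

instance [Projective P] (n : ℕ) : Projective ((complexOfEpi π).X n) := by
  obtain (_ | _ | _ | n) := n
  · exact (inferInstance : Projective P)
  all_goals apply Projective.projective_over

noncomputable def ofEpi [Projective P] [Epi π] : ProjectiveResolution Z where
  complex := complexOfEpi π
  π := (ChainComplex.toSingle₀Equiv _ _).symm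
    ⟨π, by rw [complexOfEpi_d_one_zero]; exact d_comp_self π⟩
  quasiIso := ⟨fun n => by
    cases n
    · rw [ChainComplex.quasiIsoAt₀_iff, ShortComplex.quasiIso_iff_of_zeros']
      · refine (ShortComplex.exact_and_epi_g_iff_of_iso ?_).2
          ⟨exact_d_f π, by dsimp; infer_instance⟩
        refine ShortComplex.isoMk (Iso.refl _) (Iso.refl _) (Iso.refl _) ?_ ?_
        · exact (Category.id_comp _).trans
            ((complexOfEpi_d_one_zero π).symm.trans (Category.comp_id _).symm)
        · exact (Category.id_comp _).trans
            ((ChainComplex.toSingle₀Equiv_symm_apply_f_zero (C := complexOfEpi π) (X := Z) π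
              _).symm.trans (Category.comp_id _).symm)
      all_goals rfl
    · rw [quasiIsoAt_iff_exactAt']
      · apply complexOfEpi_exactAt_succ
      · apply ChainComplex.exactAt_succ_single_obj⟩

lemma ofEpi_complex_d_one_zero [Projective P] [Epi π] : (ofEpi π).complex.d 1 0 = d π :=
  complexOfEpi_d_one_zero π

end

lemma exists_d_comp_eq_smul_of_smul_ext_eq_zero_s3 {R : Type u} [CommRing R]
    {N M : ModuleCat.{u} R} (P : ProjectiveResolution N) {x : R}
    (hx : ∀ e : ((Ext R (ModuleCat.{u} R) 1).obj (Opposite.op N)).obj M, x • e = 0)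
    (ψ : P.complex.X 1 ⟶ M) (hψ : P.complex.d 2 1 ≫ ψ = 0) :
    ∃ h : P.complex.X 0 ⟶ M, P.complex.d 1 0 ≫ h = x • ψ := by
  let S := (P.complex.linearYonedaObj R M).sc' 0 1 2
  let ε : ((Ext R (ModuleCat.{u} R) 1).obj (Opposite.op N)).obj M ≃ₗ[R]
      S.moduleCatLeftHomologyData.H :=
    (P.isoExt 1 M ≪≫
      (P.complex.linearYonedaObj R M).homologyIsoSc' 0 1 2 (by simp) (by simp) ≪≫
        S.moduleCatHomologyIso).toLinearEquiv
  let c : LinearMap.ker S.g.hom := ⟨ψ, hψ⟩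
  have hc : (Submodule.Quotient.mk (x • c) : S.moduleCatLeftHomologyData.H) = 0 := by
    apply ε.symm.injective
    exact (ε.symm.map_smul x (Submodule.Quotient.mk c)).trans ((hx _).trans ε.symm.map_zero.symm)
  obtain ⟨h, hh⟩ := (Submodule.Quotient.mk_eq_zero _).1 hc
  exact ⟨h, congrArg Subtype.val hh⟩

end CategoryTheory.ProjectiveResolution

lemma exists_extension_smul_of_smul_ext_eq_zero {R : Type u} [CommRing R] {F : Type u}
    [AddCommGroup F] [Module R F] [Module.Projective R F] {N M : ModuleCat.{u} R} {x : R}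
    (hx : ∀ e : ((Ext R (ModuleCat.{u} R) 1).obj (Opposite.op N)).obj M, x • e = 0)
    {g : F →ₗ[R] N} (hg : Function.Surjective g) (φ : LinearMap.ker g →ₗ[R] M) :
    ∃ h : F →ₗ[R] M, ∀ k : LinearMap.ker g, h k = x • φ k := by
  let π : ModuleCat.of R F ⟶ N := ModuleCat.ofHom g
  have : Epi π := (ModuleCat.epi_iff_surjective π).2 hg
  let P := ProjectiveResolution.ofEpi π
  let d₁ : P.complex.X 1 →ₗ[R] F := (P.complex.d 1 0).hom
  have hd₁ : LinearMap.range d₁ = LinearMap.ker g := by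
    change LinearMap.range (P.complex.d 1 0).hom = LinearMap.ker π.hom
    rw [ProjectiveResolution.ofEpi_complex_d_one_zero]
    exact (exact_d_f π).moduleCat_range_eq_ker
  have hd₁_mem (w : P.complex.X 1) : d₁ w ∈ LinearMap.ker g :=
    hd₁ ▸ LinearMap.mem_range_self d₁ w
  let ψ : P.complex.X 1 ⟶ M := ModuleCat.ofHom (φ ∘ₗ d₁.codRestrict _ hd₁_mem)
  have hψ : P.complex.d 2 1 ≫ ψ = 0 := by
    ext w
    have h0 : d₁ ((P.complex.d 2 1).hom w) = 0 := by
      change (P.complex.d 2 1 ≫ P.complex.d 1 0) w = 0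
      rw [HomologicalComplex.d_comp_d]
      rfl
    change φ ⟨d₁ ((P.complex.d 2 1).hom w), hd₁_mem _⟩ = 0
    rw [show (⟨_, hd₁_mem _⟩ : LinearMap.ker g) = 0 from Subtype.ext h0, map_zero]
  obtain ⟨h, hh⟩ := P.exists_d_comp_eq_smul_of_smul_ext_eq_zero_s3 hx ψ hψ
  refine ⟨h.hom, fun k => ?_⟩
  obtain ⟨w, hw⟩ : (k : F) ∈ LinearMap.range d₁ := by
    rw [hd₁]; exact k.2
  obtain rfl : (⟨d₁ w, hd₁_mem w⟩ : LinearMap.ker g) = k := Subtype.ext hw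
  exact LinearMap.congr_fun (congrArg ModuleCat.Hom.hom hh) w

section

variable {R F N M : Type*} [CommRing R] [AddCommGroup F] [Module R F] [AddCommGroup N]
  [Module R N] [AddCommGroup M] [Module R M] {x : R} {g : F →ₗ[R] N} {i : M →ₗ[R] F}
  {h : F →ₗ[R] M}

lemma injective_prod_of_comp_eq_smul (hig : Function.Exact i g) (hhi : ∀ m, h (i m) = x • m)
    (hx : IsSMulRegular M x) : Function.Injective (g.prod h) := by
  refine (injective_iff_map_eq_zero _).2 fun v hv => ?_
  obtain ⟨hgv, hhv⟩ : g v = 0 ∧ h v = 0 := by simpa using hv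
  obtain ⟨m, rfl⟩ := (hig v).1 hgv
  rw [hhi, ← smul_zero x] at hhv
  rw [hx hhv, map_zero]

lemma exists_surjective_exact_prod_quotSMulTop (hg : Function.Surjective g)
    (hig : Function.Exact i g) (hhi : ∀ m, h (i m) = x • m) :
    ∃ c : N × M →ₗ[R] QuotSMulTop x M,
      Function.Surjective c ∧ LinearMap.range (g.prod h) = LinearMap.ker c := by
  let q := (x • ⊤ : Submodule R M).mkQ
  have hker : LinearMap.ker g ≤ LinearMap.ker (q ∘ₗ h) := by
    intro v hv
    obtain ⟨m, rfl⟩ := (hig v).1 hv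
    rw [LinearMap.mem_ker, LinearMap.comp_apply, hhi, Submodule.mkQ_apply,
      Submodule.Quotient.mk_eq_zero]
    exact Submodule.smul_mem_pointwise_smul m x ⊤ trivial
  let hbar := (LinearMap.ker g).liftQ (q ∘ₗ h) hker ∘ₗ
    (g.quotKerEquivOfSurjective hg).symm.toLinearMap
  have hbar_g (v : F) : hbar (g v) = q (h v) := by simp [hbar]
  refine ⟨(-hbar).coprod q, fun m => ?_, le_antisymm ?_ ?_⟩
  · obtain ⟨m, rfl⟩ := (x • ⊤ : Submodule R M).mkQ_surjective m
    exact ⟨(0, m), by simp [q]⟩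
  · rintro _ ⟨v, rfl⟩
    simp [hbar_g]
  · rintro ⟨n, m⟩ hnm
    obtain ⟨v, rfl⟩ := hg n
    have hq : -q (h v) + q m = 0 := by simpa [hbar_g] using hnm
    have : m - h v ∈ (x • ⊤ : Submodule R M) :=
      (Submodule.Quotient.eq _).1 (neg_add_eq_zero.1 hq).symm
    obtain ⟨m', -, hm'⟩ := (Submodule.mem_smul_pointwise_iff_exists _ _ _).1 this
    refine ⟨v + i m', ?_⟩
    simp [hig.apply_apply_eq_zero, hhi, hm']

end

theorem ses_free_to_sum_to_quotient_general
    (R : Type) [CommRing R] [IsLocalRing R]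
    (N : ModuleCat.{0} R)
    (M : ModuleCat.{0} R) (hM : IsSyzygyOf R N M)
    (x : R) (hx : RingTheory.Sequence.IsRegular R [x])
    (hann : SMulExtZero R x 1 N M) :
    ∃ (q : ℕ) (f : (Fin q → R) →ₗ[R] (↥N × ↥M))
      (g : (↥N × ↥M) →ₗ[R] QuotSMulTop x ↥M),
      Function.Injective f ∧ Function.Surjective g ∧ LinearMap.range f = LinearMap.ker g := by
  obtain ⟨q, g, hg, -, ⟨e⟩⟩ := hM
  let i : M →ₗ[R] Fin q → R := (LinearMap.ker g).subtype ∘ₗ e.toLinearMap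
  have hig : Function.Exact i g :=
    LinearEquiv.precomp_exact_iff_exact.2 (LinearMap.exact_subtype_ker_map g)
  have hxR : IsSMulRegular R x := ((RingTheory.Sequence.isRegular_cons_iff R x []).1 hx).1
  have hxM : IsSMulRegular M x :=
    (e.isSMulRegular_congr x).2 ((IsSMulRegular.pi fun _ => hxR).submodule _ x)
  obtain ⟨h, hh⟩ := exists_extension_smul_of_smul_ext_eq_zero hann hg e.symm.toLinearMap
  have hhi (m : M) : h (i m) = x • m := by simpa [i] using hh (e m)
  obtain ⟨c, hc, hrange⟩ := exists_surjective_exact_prod_quotSMulTop hg hig hhi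
  exact ⟨q, g.prod h, c, injective_prod_of_comp_eq_smul hig hhi hxM, hc, hrange⟩

/-- the base case of Proposition 2.9: a short exact sequence
`0 → F → N ⊕ Ω N → M/xM → 0` with `F` free, where `M = Ω N`. -/
theorem ses_free_to_sum_to_quotient
    (R : Type) [CommRing R] [IsNoetherianRing R] [IsLocalRing R]
    (N : ModuleCat.{0} R) [Module.Finite R N] [Nontrivial N]
    (M : ModuleCat.{0} R) (hM : IsSyzygyOf R N M)
    (x : R) (hx : RingTheory.Sequence.IsRegular R [x])
    (hann : SMulExtZero R x 1 N M) :
    ∃ (q : ℕ) (f : (Fin q → R) →ₗ[R] (↥N × ↥M))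
      (g : (↥N × ↥M) →ₗ[R] QuotSMulTop x ↥M),
      Function.Injective f ∧ Function.Surjective g ∧ LinearMap.range f = LinearMap.ker g :=
  ses_free_to_sum_to_quotient_general R N M hM x hx hann
end
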